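/- Let κ > 0 with κ ≠ 4 and let n be real. Define the exponents α = −2n/(κ−4), β = 2n/(κ−4), γ = −2κn²/(κ−4)², x = 2κn²/(κ−4)², and define F(u,v) = u^{α} · v^{β} · (u−v)^{γ} using principal-branch complex powers, for u in the upper half-plane {z : Im z > 0} and v in the lower half-plane {z : Im z < 0}. Then for all such (u,v): (κ/2)·[∂²F/∂u² + 2·∂²F/∂u∂v + ∂²F/∂v²] + (2/u)·∂F/∂u + (2/v)·∂F/∂v − x·(1/u² + 1/v²)·F − n·(1/u² − 1/v²)·F = 0. -/

import Mathlib

/-!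
Off the branch cuts, `F = u^α v^β (u-v)^γ` has logarithmic derivatives
`L_u = α/u + γ/(u-v)` and `L_v = β/v - γ/(u-v)`, so every derivative in the equation is a
rational multiple of `F`: `∂²F = (∂L + L²) F` and `∂_u∂_v F = (∂_u L_v + L_u L_v) F`.
With `β = -α` and `γ = -x` the `(u-v)⁻²` terms cancel and `L_u + L_v = α (1/u - 1/v)`, so the
quotient by `F` collapses to
`((u-v)² (κα² - 2x) - (v² - u²) ((κ-4)α + 2n)) / (2u²v²)`, which vanishes by the choice of
exponents.
-/

open Complex Filter Topology

noncomputable def powerAnsatz (a b c u v : ℂ) : ℂ := u ^ a * v ^ b * (u - v) ^ c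

namespace powerAnsatz

variable {a b c u v : ℂ}

lemma hasDerivAt_left (hu : u ∈ slitPlane) (huv : u - v ∈ slitPlane) :
    HasDerivAt (powerAnsatz a b c · v)
      ((a / u + c / (u - v)) * powerAnsatz a b c u v) u := by
  have hu' : HasDerivAt (· ^ a) (a * u ^ (a - 1) * 1) u := (hasDerivAt_id u).cpow_const hu
  have huv' : HasDerivAt (fun w => (w - v) ^ c) (c * (u - v) ^ (c - 1) * 1) u :=
    ((hasDerivAt_id u).sub_const v).cpow_const huv
  refine ((hu'.mul_const (v ^ b)).mul huv').congr_deriv ?_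
  rw [cpow_sub _ _ (slitPlane_ne_zero hu), cpow_sub _ _ (slitPlane_ne_zero huv), cpow_one,
    cpow_one, powerAnsatz]
  ring

lemma hasDerivAt_right (hv : v ∈ slitPlane) (huv : u - v ∈ slitPlane) :
    HasDerivAt (powerAnsatz a b c u ·)
      ((b / v - c / (u - v)) * powerAnsatz a b c u v) v := by
  have hv' : HasDerivAt (· ^ b) (b * v ^ (b - 1) * 1) v := (hasDerivAt_id v).cpow_const hv
  have huv' : HasDerivAt (fun w => (u - w) ^ c) (c * (u - v) ^ (c - 1) * (0 - 1)) v :=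
    ((hasDerivAt_const v u).sub (hasDerivAt_id v)).cpow_const huv
  refine (((hasDerivAt_const v (u ^ a)).mul hv').mul huv').congr_deriv ?_
  simp only [Pi.mul_apply]
  rw [cpow_sub _ _ (slitPlane_ne_zero hv), cpow_sub _ _ (slitPlane_ne_zero huv), cpow_one,
    cpow_one, powerAnsatz]
  ring

lemma eventually_left (hu : u ∈ slitPlane) (huv : u - v ∈ slitPlane) :
    ∀ᶠ w in 𝓝 u, w ∈ slitPlane ∧ w - v ∈ slitPlane :=
  (isOpen_slitPlane.eventually_mem hu).and
    ((continuous_sub_right v).continuousAt.preimage_mem_nhds (isOpen_slitPlane.mem_nhds huv))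

lemma eventually_right (hv : v ∈ slitPlane) (huv : u - v ∈ slitPlane) :
    ∀ᶠ w in 𝓝 v, w ∈ slitPlane ∧ u - w ∈ slitPlane :=
  (isOpen_slitPlane.eventually_mem hv).and
    ((continuous_sub_left u).continuousAt.preimage_mem_nhds (isOpen_slitPlane.mem_nhds huv))

lemma deriv_deriv_left (hu : u ∈ slitPlane) (huv : u - v ∈ slitPlane) :
    deriv (fun w => deriv (powerAnsatz a b c · v) w) u =
      (-a / u ^ 2 - c / (u - v) ^ 2 + (a / u + c / (u - v)) ^ 2) * powerAnsatz a b c u v := by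
  have hL : HasDerivAt (fun w => a / w + c / (w - v)) (-a / u ^ 2 - c / (u - v) ^ 2) u := by
    refine (((hasDerivAt_const u a).div (hasDerivAt_id u) (slitPlane_ne_zero hu)).add
      ((hasDerivAt_const u c).div ((hasDerivAt_id u).sub_const v)
        (slitPlane_ne_zero huv))).congr_deriv ?_
    simp only [id]
    ring
  have hF := hasDerivAt_left (a := a) (b := b) (c := c) hu huv
  refine ((hL.mul hF).congr_of_eventuallyEq ?_).deriv.trans (by ring)
  filter_upwards [eventually_left hu huv] with w hw using (hasDerivAt_left hw.1 hw.2).deriv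

lemma deriv_deriv_mixed (hu : u ∈ slitPlane) (hv : v ∈ slitPlane) (huv : u - v ∈ slitPlane) :
    deriv (fun w => deriv (powerAnsatz a b c w ·) v) u =
      (c / (u - v) ^ 2 + (b / v - c / (u - v)) * (a / u + c / (u - v))) *
        powerAnsatz a b c u v := by
  have hL : HasDerivAt (fun w => b / v - c / (w - v)) (c / (u - v) ^ 2) u := by
    refine ((hasDerivAt_const u (b / v)).sub ((hasDerivAt_const u c).div
      ((hasDerivAt_id u).sub_const v) (slitPlane_ne_zero huv))).congr_deriv ?_
    simp only [id]
    ring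
  have hF := hasDerivAt_left (a := a) (b := b) (c := c) hu huv
  refine ((hL.mul hF).congr_of_eventuallyEq ?_).deriv.trans (by ring)
  filter_upwards [eventually_left hu huv] with w hw using (hasDerivAt_right hv hw.2).deriv

lemma deriv_deriv_right (hv : v ∈ slitPlane) (huv : u - v ∈ slitPlane) :
    deriv (fun w => deriv (powerAnsatz a b c u ·) w) v =
      (-b / v ^ 2 - c / (u - v) ^ 2 + (b / v - c / (u - v)) ^ 2) * powerAnsatz a b c u v := by
  have hL : HasDerivAt (fun w => b / w - c / (u - w)) (-b / v ^ 2 - c / (u - v) ^ 2) v := by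
    refine (((hasDerivAt_const v b).div (hasDerivAt_id v) (slitPlane_ne_zero hv)).sub
      ((hasDerivAt_const v c).div ((hasDerivAt_const v u).sub (hasDerivAt_id v))
        (slitPlane_ne_zero huv))).congr_deriv ?_
    simp only [Pi.sub_apply, id]
    ring
  have hF := hasDerivAt_right (a := a) (b := b) (c := c) hv huv
  refine ((hL.mul hF).congr_of_eventuallyEq ?_).deriv.trans (by ring)
  filter_upwards [eventually_right hv huv] with w hw using (hasDerivAt_right hw.1 hw.2).deriv

end powerAnsatz

lemma sleSymbol_eq_zero {a b c x K N u v : ℂ} (hu : u ≠ 0) (hv : v ≠ 0) (huv : u - v ≠ 0)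
    (hb : b = -a) (hc : c = -x) (hx : K * a ^ 2 = 2 * x) (hn : (K - 4) * a = -2 * N) :
    K / 2 * ((-a / u ^ 2 - c / (u - v) ^ 2 + (a / u + c / (u - v)) ^ 2)
        + 2 * (c / (u - v) ^ 2 + (b / v - c / (u - v)) * (a / u + c / (u - v)))
        + (-b / v ^ 2 - c / (u - v) ^ 2 + (b / v - c / (u - v)) ^ 2))
      + 2 / u * (a / u + c / (u - v)) + 2 / v * (b / v - c / (u - v))
      - x * (1 / u ^ 2 + 1 / v ^ 2) - N * (1 / u ^ 2 - 1 / v ^ 2) = 0 := by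
  subst hb hc
  calc _ = ((u - v) ^ 2 * (K * a ^ 2 - 2 * x) - (v ^ 2 - u ^ 2) * ((K - 4) * a + 2 * N))
        / (2 * u ^ 2 * v ^ 2) := by field_simp; ring
    _ = 0 := by rw [hx, hn]; ring

theorem stmt1_general (κ n : ℝ) (hκ4 : κ ≠ 4)
    (α β γ x : ℝ)
    (hα : α = -(2 * n) / (κ - 4))
    (hβ : β = 2 * n / (κ - 4))
    (hγ : γ = -(2 * κ * n ^ 2) / (κ - 4) ^ 2)
    (hx : x = 2 * κ * n ^ 2 / (κ - 4) ^ 2)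
    (F : ℂ → ℂ → ℂ)
    (hF : ∀ u v : ℂ, F u v = u ^ (α : ℂ) * v ^ (β : ℂ) * (u - v) ^ (γ : ℂ)) :
    ∀ u v : ℂ, 0 < u.im → v.im < 0 →
      (κ / 2 : ℂ) *
          (deriv (fun u' => deriv (fun u'' => F u'' v) u') u
            + 2 * deriv (fun u' => deriv (fun v' => F u' v') v) u
            + deriv (fun v' => deriv (fun v'' => F u v'') v') v)
        + (2 / u) * deriv (fun u' => F u' v) u
        + (2 / v) * deriv (fun v' => F u v') v
        - (x : ℂ) * (1 / u ^ 2 + 1 / v ^ 2) * F u v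
        - (n : ℂ) * (1 / u ^ 2 - 1 / v ^ 2) * F u v = 0 := by
  intro u v hu hv
  obtain rfl : F = powerAnsatz α β γ := funext fun u => funext (hF u)
  have hκ4' : κ - 4 ≠ 0 := sub_ne_zero.2 hκ4
  have hβα : β = -α := by rw [hβ, hα]; ring
  have hγx : γ = -x := by rw [hγ, hx]; ring
  have hxα : κ * α ^ 2 = 2 * x := by rw [hα, hx]; field_simp
  have hnα : (κ - 4) * α = -2 * n := by rw [hα]; field_simp
  have hu' : u ∈ slitPlane := mem_slitPlane_iff.2 (Or.inr hu.ne')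
  have hv' : v ∈ slitPlane := mem_slitPlane_iff.2 (Or.inr hv.ne)
  have huv : u - v ∈ slitPlane := mem_slitPlane_iff.2 (Or.inr (by simp only [sub_im]; linarith))
  rw [powerAnsatz.deriv_deriv_left hu' huv, powerAnsatz.deriv_deriv_mixed hu' hv' huv,
    powerAnsatz.deriv_deriv_right hv' huv, (powerAnsatz.hasDerivAt_left hu' huv).deriv,
    (powerAnsatz.hasDerivAt_right hv' huv).deriv]
  have hsymbol := sleSymbol_eq_zero (a := α) (b := β) (c := γ) (x := x) (K := κ) (N := n)
    (slitPlane_ne_zero hu') (slitPlane_ne_zero hv') (slitPlane_ne_zero huv)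
    (by exact_mod_cast hβα) (by exact_mod_cast hγx) (by exact_mod_cast hxα)
    (by exact_mod_cast hnα)
  linear_combination powerAnsatz α β γ u v * hsymbol

/-- The bosonic power-law ansatz `F(u,v) = u^α v^β (u-v)^γ` with exponents
`α = -2n/(κ-4)`, `β = 2n/(κ-4)`, `γ = -2κn²/(κ-4)²`, `x = 2κn²/(κ-4)²` solves the
leading-order SLE equation, for `u` in the upper half-plane and `v` in the lower
half-plane. -/
theorem stmt1 (κ n : ℝ) (hκ : 0 < κ) (hκ4 : κ ≠ 4)
    (α β γ x : ℝ)
    (hα : α = -(2 * n) / (κ - 4))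
    (hβ : β = 2 * n / (κ - 4))
    (hγ : γ = -(2 * κ * n ^ 2) / (κ - 4) ^ 2)
    (hx : x = 2 * κ * n ^ 2 / (κ - 4) ^ 2)
    (F : ℂ → ℂ → ℂ)
    (hF : ∀ u v : ℂ, F u v = u ^ (α : ℂ) * v ^ (β : ℂ) * (u - v) ^ (γ : ℂ)) :
    ∀ u v : ℂ, 0 < u.im → v.im < 0 →
      (κ / 2 : ℂ) *
          (deriv (fun u' => deriv (fun u'' => F u'' v) u') u
            + 2 * deriv (fun u' => deriv (fun v' => F u' v') v) u
            + deriv (fun v' => deriv (fun v'' => F u v'') v') v)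
        + (2 / u) * deriv (fun u' => F u' v) u
        + (2 / v) * deriv (fun v' => F u v') v
        - (x : ℂ) * (1 / u ^ 2 + 1 / v ^ 2) * F u v
        - (n : ℂ) * (1 / u ^ 2 - 1 / v ^ 2) * F u v = 0 :=
  stmt1_general κ n hκ4 α β γ x hα hβ hγ hx F hF
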